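/- Let G be a topological group admitting a dense subgroup H and a mean φ on the space of bounded Borel-measurable real-valued functions on G such that φ(f ∘ λ_h) = φ(f) for all h ∈ H and all bounded Borel f, where λ_h(x) = hx. Then G is amenable: there is a left-invariant mean on RUCB(G). -/

import Mathlib

open scoped Topology

/-- A mean on the space of real-valued functions satisfying predicate `P`. -/
def IsMean {X : Type*} (P : (X → ℝ) → Prop) (μ : (X → ℝ) → ℝ) : Prop :=
  μ (fun _ => (1 : ℝ)) = 1 ∧
  (∀ f, P f → (∀ x, 0 ≤ f x) → 0 ≤ μ f) ∧
  (∀ f g, P f → P g → μ (fun x => f x + g x) = μ f + μ g) ∧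
  (∀ (c : ℝ) (f), P f → μ (fun x => c * f x) = c * μ f)

/-- `f : G → ℝ` is bounded and right uniformly continuous. -/
def IsRUCB (G : Type*) [Group G] [TopologicalSpace G] (f : G → ℝ) : Prop :=
  (∃ C, ∀ x, |f x| ≤ C) ∧
  ∀ ε : ℝ, 0 < ε → ∃ V ∈ 𝓝 (1 : G), ∀ v ∈ V, ∀ x, |f (v * x) - f x| < ε

/-- A topological group is amenable if there is a left-invariant mean on `RUCB(G)`. -/
def Amenable (G : Type*) [Group G] [TopologicalSpace G] : Prop :=
  ∃ μ : (G → ℝ) → ℝ, IsMean (IsRUCB G) μ ∧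
    ∀ (g : G) (f : G → ℝ), IsRUCB G f → μ (fun x => f (g * x)) = μ f

/-- `f` is a bounded Borel-measurable real-valued function. -/
def IsBddBorel {G : Type*} [MeasurableSpace G] (f : G → ℝ) : Prop :=
  (∃ C, ∀ x, |f x| ≤ C) ∧ Measurable f

/-!
A right uniformly continuous function is continuous, hence Borel, so `φ` restricts to a mean on
`RUCB(G)`. For `g ∈ G` and `ε > 0`, density gives `h ∈ H` with `g h⁻¹` so close to `1` that the
translates `f (g ·)` and `f (h ·)` are uniformly `ε`-close; a mean is `1`-Lipschitz for the sup
distance, and `φ (f (h ·)) = φ f`, so `|φ (f (g ·)) - φ f| ≤ ε`.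
-/

open Filter

namespace IsMean

variable {X : Type*} {P : (X → ℝ) → Prop} {μ : (X → ℝ) → ℝ}

theorem of_imp {Q : (X → ℝ) → Prop} (hμ : IsMean Q μ) (hPQ : ∀ f, P f → Q f) : IsMean P μ :=
  ⟨hμ.1, fun f hf => hμ.2.1 f (hPQ f hf),
    fun f g hf hg => hμ.2.2.1 f g (hPQ f hf) (hPQ g hg),
    fun c f hf => hμ.2.2.2 c f (hPQ f hf)⟩

theorem apply_const (hμ : IsMean P μ) (h1 : P fun _ => 1) (c : ℝ) : μ (fun _ => c) = c := by
  simpa [hμ.1] using hμ.2.2.2 c _ h1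

theorem apply_sub {f g : X → ℝ} (hμ : IsMean P μ) (hg : P g) (hfg : P fun x => f x - g x) :
    μ (fun x => f x - g x) = μ f - μ g := by
  have := hμ.2.2.1 _ g hfg hg
  simp only [sub_add_cancel] at this
  linarith

theorem mono {f g : X → ℝ} (hμ : IsMean P μ) (hf : P f) (hgf : P fun x => g x - f x)
    (hle : ∀ x, f x ≤ g x) : μ f ≤ μ g := by
  have := hμ.2.1 _ hgf fun x => sub_nonneg.2 (hle x)
  rw [hμ.apply_sub hf hgf] at this
  linarith

theorem abs_sub_le (hμ : IsMean P μ) (hconst : ∀ c : ℝ, P fun _ => c)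
    (hsub : ∀ f g, P f → P g → P fun x => f x - g x) {f g : X → ℝ} {ε : ℝ} (hf : P f) (hg : P g)
    (hε : ∀ x, |f x - g x| ≤ ε) : |μ f - μ g| ≤ ε := by
  have hfg := hsub f g hf hg
  rw [← hμ.apply_sub hg hfg, abs_le]
  constructor
  · simpa [hμ.apply_const (hconst 1)] using hμ.mono (hconst (-ε)) (hsub _ _ hfg (hconst (-ε)))
      fun x => (abs_le.1 (hε x)).1
  · simpa [hμ.apply_const (hconst 1)] using hμ.mono hfg (hsub _ _ (hconst ε) hfg)
      fun x => (abs_le.1 (hε x)).2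

end IsMean

section BddBorel

variable {G : Type*} [MeasurableSpace G]

theorem isBddBorel_const (c : ℝ) : IsBddBorel fun _ : G => c :=
  ⟨⟨|c|, fun _ => le_rfl⟩, measurable_const⟩

theorem IsBddBorel.sub {f g : G → ℝ} (hf : IsBddBorel f) (hg : IsBddBorel g) :
    IsBddBorel fun x => f x - g x := by
  obtain ⟨⟨C, hC⟩, hfm⟩ := hf
  obtain ⟨⟨D, hD⟩, hgm⟩ := hg
  exact ⟨⟨C + D, fun x => (abs_sub _ _).trans (add_le_add (hC x) (hD x))⟩, hfm.sub hgm⟩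

theorem IsBddBorel.comp_mul_left [Mul G] [MeasurableMul G] {f : G → ℝ} (hf : IsBddBorel f)
    (g : G) : IsBddBorel fun x => f (g * x) :=
  ⟨hf.1.imp fun _ hC x => hC (g * x), hf.2.comp (measurable_const_mul g)⟩

end BddBorel

namespace IsRUCB

variable {G : Type*} [Group G] [TopologicalSpace G] {f : G → ℝ}

theorem continuous [ContinuousMul G] (hf : IsRUCB G f) : Continuous f := by
  refine continuous_iff_continuousAt.2 fun x => Metric.tendsto_nhds.2 fun ε hε => ?_
  obtain ⟨V, hV, hVf⟩ := hf.2 ε hε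
  have hx : Tendsto (· * x⁻¹) (𝓝 x) (𝓝 1) :=
    (continuous_mul_const x⁻¹).tendsto' x 1 (mul_inv_cancel x)
  filter_upwards [hx hV] with y hy
  simpa [Real.dist_eq] using hVf _ hy x

theorem isBddBorel [ContinuousMul G] [MeasurableSpace G] [OpensMeasurableSpace G]
    (hf : IsRUCB G f) : IsBddBorel f :=
  ⟨hf.1, hf.continuous.measurable⟩

theorem exists_mem_forall_abs_sub_translate_lt [IsTopologicalGroup G] (hf : IsRUCB G f)
    {s : Set G} (hs : Dense s) (g : G) {ε : ℝ} (hε : 0 < ε) :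
    ∃ h ∈ s, ∀ x, |f (g * x) - f (h * x)| < ε := by
  obtain ⟨V, hV, hVf⟩ := hf.2 ε hε
  have hnhds : (fun y => g * y⁻¹) ⁻¹' V ∈ 𝓝 g :=
    (continuous_const.mul continuous_inv).tendsto' g 1 (mul_inv_cancel g) hV
  obtain ⟨h, hhs, hhV⟩ := hs.inter_nhds_nonempty hnhds
  refine ⟨h, hhs, fun x => ?_⟩
  simpa [mul_assoc] using hVf _ hhV (h * x)

end IsRUCB

theorem mm_amenable_implies_amenable {G : Type*} [Group G] [TopologicalSpace G]
    [IsTopologicalGroup G] [MeasurableSpace G] [BorelSpace G]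
    (H : Subgroup G) (hdense : Dense (H : Set G))
    (φ : (G → ℝ) → ℝ) (hmean : IsMean IsBddBorel φ)
    (hinv : ∀ h ∈ H, ∀ f : G → ℝ, IsBddBorel f → φ (fun x => f (h * x)) = φ f) :
    Amenable G := by
  refine ⟨φ, hmean.of_imp fun f hf => hf.isBddBorel, fun g f hf => ?_⟩
  refine eq_of_forall_dist_le fun ε hε => ?_
  obtain ⟨h, hH, hclose⟩ := hf.exists_mem_forall_abs_sub_translate_lt hdense g hε
  have hfB := hf.isBddBorel
  rw [Real.dist_eq, ← hinv h hH f hfB]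
  exact hmean.abs_sub_le isBddBorel_const (fun _ _ => IsBddBorel.sub)
    (hfB.comp_mul_left g) (hfB.comp_mul_left h) fun x => (hclose x).le
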